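/- arXiv:1503.06924 — 2 statements merged into one kernel-verified Lean document; each statement's English description precedes it below -/
import Mathlib

section
/- Let l ≥ 3, let f be a 5-L(2,1)-labeling of G(l), and let H be a connected component of H_1 or of H_2. If l is not a multiple of 3, then H contains no cycle; if l is a multiple of 3, then either H itself is a 3-cycle or H contains no cycle. -/
/-- An L(2,1)-labeling of a simple graph: adjacent vertices get labels differing by
at least 2, and vertices at distance exactly 2 get distinct labels. -/
def IsL21Labeling {V : Type*} (G : SimpleGraph V) (f : V → ℕ) : Prop :=
  (∀ a b : V, G.Adj a b → 2 ≤ ((f a : ℤ) - (f b : ℤ)).natAbs) ∧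
  (∀ a b : V, G.dist a b = 2 → f a ≠ f b)

/-- A k-L(2,1)-labeling: an L(2,1)-labeling with all labels in {0, 1, ..., k}. -/
def IsKL21Labeling {V : Type*} (G : SimpleGraph V) (k : ℕ) (f : V → ℕ) : Prop :=
  IsL21Labeling G f ∧ ∀ a : V, f a ≤ k

/-- The λ-number of a graph: the least k such that G admits a k-L(2,1)-labeling. -/
noncomputable def lambdaNumber {V : Type*} (G : SimpleGraph V) : ℕ :=
  sInf {k : ℕ | ∃ f : V → ℕ, IsKL21Labeling G k f}

/-- The vertices of the graph G(l): u, v, x_1, ..., x_l, y_1, ..., y_l.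
Here `x i` for `i : Fin l` stands for the paper's x_{i+1} (0-indexed). -/
inductive GLVert (l : ℕ) : Type where
  | u : GLVert l
  | v : GLVert l
  | x : Fin l → GLVert l
  | y : Fin l → GLVert l

/-- The edge relation of G(l) (up to symmetrization):
x_i x_{i+1}, y_i y_{i+1}, x_i y_i, u x_1, u y_1, v x_l, v y_l. -/
def GLRel (l : ℕ) : GLVert l → GLVert l → Prop
  | .x i, .x j => (i : ℕ) + 1 = (j : ℕ)
  | .y i, .y j => (i : ℕ) + 1 = (j : ℕ)
  | .x i, .y j => i = j
  | .u, .x i => (i : ℕ) = 0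
  | .u, .y i => (i : ℕ) = 0
  | .x i, .v => (i : ℕ) = l - 1
  | .y i, .v => (i : ℕ) = l - 1
  | _, _ => False

/-- The graph G(l) from the paper. -/
def GLGraph (l : ℕ) : SimpleGraph (GLVert l) := SimpleGraph.fromRel (GLRel l)

/-- Vertices labelled with an even label 0, 2 or 4 (vertex set of H_1). -/
def H1Set (l : ℕ) (f : GLVert l → ℕ) : Set (GLVert l) :=
  {w | f w = 0 ∨ f w = 2 ∨ f w = 4}

/-- Vertices labelled with an odd label 1, 3 or 5 (vertex set of H_2). -/
def H2Set (l : ℕ) (f : GLVert l → ℕ) : Set (GLVert l) :=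
  {w | f w = 1 ∨ f w = 3 ∨ f w = 5}

/-- `T` is the vertex set of a connected component of the subgraph of `G` induced by `S`. -/
def IsCompOf {V : Type*} (G : SimpleGraph V) (S T : Set V) : Prop :=
  ∃ c : (G.induce S).ConnectedComponent,
    T = Subtype.val '' {w : S | (G.induce S).connectedComponentMk w = c}

/-- The induced subgraph on `T` is a 3-cycle. -/
def IsTriangleSet {V : Type*} (G : SimpleGraph V) (T : Set V) : Prop :=
  ∃ a b c : V, a ≠ b ∧ a ≠ c ∧ b ≠ c ∧ T = {a, b, c} ∧
    G.Adj a b ∧ G.Adj b c ∧ G.Adj a c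

/-- There is a cycle of `G` all of whose vertices lie in `T`
(equivalently, the induced subgraph on `T` contains a cycle). -/
def HasCycleIn {V : Type*} (G : SimpleGraph V) (T : Set V) : Prop :=
  ∃ (v : V) (wk : G.Walk v v), wk.IsCycle ∧ ∀ z ∈ wk.support, z ∈ T

/-!
Labels of one parity class lie in `{0, 2, 4}` or `{1, 3, 5}`, so four vertices that are pairwise
adjacent or at distance two can never share a parity. In particular no square
`x_i y_i x_{i+1} y_{i+1}` of the ladder is monochromatic, and when an end triangle (say `u x_1 y_1`)
is monochromatic its three labels exhaust the class, so the next rung has the other parity and the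
component is that triangle alone.

A monochromatic cycle, seen from its highest vertex in the order `u < rung 1 < ⋯ < rung l < v`,
closes up through a square or an end triangle, hence through an end triangle. Starting from a
monochromatic triangle at `u`, the labels of two consecutive rungs run through a finite automaton
of period three, and the labeling can be completed at `v` only if `3 ∣ l`. The triangle at `v`
reduces to the one at `u` by reflecting the ladder.
-/

namespace SimpleGraph

variable {V W : Type*} {G : SimpleGraph V} {G' : SimpleGraph W}

lemma dist_eq_two_iff {a b : V} :
    G.dist a b = 2 ↔ a ≠ b ∧ ¬ G.Adj a b ∧ (G.commonNeighbors a b).Nonempty := by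
  rw [dist, ENat.toNat_eq_iff two_ne_zero]
  exact edist_eq_two_iff

lemma dist_eq_two_of_adj_of_adj {a b c : V} (hab : a ≠ b) (hn : ¬ G.Adj a b)
    (hac : G.Adj a c) (hcb : G.Adj c b) : G.dist a b = 2 :=
  dist_eq_two_iff.mpr ⟨hab, hn, c, hac, hcb.symm⟩

lemma Iso.dist_eq_two (e : G ≃g G') {a b : V} (h : G.dist a b = 2) :
    G'.dist (e a) (e b) = 2 := by
  obtain ⟨hab, hn, c, hc⟩ := dist_eq_two_iff.mp h
  rw [G.mem_commonNeighbors] at hc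
  exact dist_eq_two_of_adj_of_adj (e.injective.ne hab) (by rwa [e.map_adj_iff])
    (e.map_adj_iff.mpr hc.1) (e.map_adj_iff.mpr hc.2.symm)

def TwoNeighborsWithin (G : SimpleGraph V) (C : Set V) : Prop :=
  ∀ z ∈ C, ∃ s ∈ C, ∃ t ∈ C, s ≠ t ∧ G.Adj z s ∧ G.Adj z t

lemma Walk.IsCycle.twoNeighborsWithin_support {r : V} {c : G.Walk r r} (hc : c.IsCycle) :
    G.TwoNeighborsWithin {z | z ∈ c.support} := by
  intro z hz
  obtain ⟨s, t, hst, hnbr⟩ := Set.ncard_eq_two.mp (hc.ncard_neighborSet_toSubgraph_eq_two hz)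
  have hs : c.toSubgraph.Adj z s := by
    change s ∈ c.toSubgraph.neighborSet z
    simp [hnbr]
  have ht : c.toSubgraph.Adj z t := by
    change t ∈ c.toSubgraph.neighborSet z
    simp [hnbr]
  exact ⟨s, c.mem_verts_toSubgraph.mp hs.snd_mem, t, c.mem_verts_toSubgraph.mp ht.snd_mem, hst,
    hs.adj_sub, ht.adj_sub⟩

end SimpleGraph

section IsCompOf

variable {V : Type*} {G : SimpleGraph V} {S T K : Set V}

lemma IsCompOf.subset (h : IsCompOf G S T) : T ⊆ S := by
  obtain ⟨c, rfl⟩ := h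
  rintro _ ⟨w, -, rfl⟩
  exact w.2

lemma IsCompOf.eq_of_adj_closed (h : IsCompOf G S T) (hKT : K ⊆ T) (hK : K.Nonempty)
    (hclosed : ∀ a ∈ K, ∀ b ∈ S, G.Adj a b → b ∈ K) : T = K := by
  obtain ⟨c, rfl⟩ := h
  refine hKT.antisymm' ?_
  rintro _ ⟨w, hw, rfl⟩
  obtain ⟨_, ⟨k, hk, rfl⟩, hkK⟩ : ∃ k ∈ _, k ∈ K := hK.imp fun k hk => ⟨hKT hk, hk⟩
  obtain ⟨p⟩ := SimpleGraph.ConnectedComponent.exact (hk.trans hw.symm)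
  clear hw hk
  induction p with
  | nil => exact hkK
  | cons hadj _ ih => exact ih (hclosed _ hkK _ (Subtype.prop _) hadj)

end IsCompOf

section Labeling

variable {V W : Type*} {G : SimpleGraph V} {f : V → ℕ}

def TwoApart (p q : ℕ) : Prop := p + 2 ≤ q ∨ q + 2 ≤ p

instance (p q : ℕ) : Decidable (TwoApart p q) := inferInstanceAs (Decidable (_ ∨ _))

lemma TwoApart.ne {p q : ℕ} (h : TwoApart p q) : p ≠ q := by
  unfold TwoApart at h
  omega

lemma IsL21Labeling.twoApart_of_adj (hf : IsL21Labeling G f) {a b : V} (h : G.Adj a b) :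
    TwoApart (f a) (f b) := by
  have := hf.1 a b h
  unfold TwoApart
  omega

lemma IsL21Labeling.ne_of_adj_of_adj (hf : IsL21Labeling G f) {a b c : V} (hab : a ≠ b)
    (hn : ¬ G.Adj a b) (hac : G.Adj a c) (hcb : G.Adj c b) : f a ≠ f b :=
  hf.2 a b (SimpleGraph.dist_eq_two_of_adj_of_adj hab hn hac hcb)

lemma IsKL21Labeling.comp_iso {G' : SimpleGraph W} {k : ℕ} {f : W → ℕ}
    (hf : IsKL21Labeling G' k f) (e : G ≃g G') : IsKL21Labeling G k (f ∘ e) :=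
  ⟨⟨fun _ _ h => hf.1.1 _ _ (e.map_adj_iff.mpr h), fun _ _ h => hf.1.2 _ _ (e.dist_eq_two h)⟩,
    fun a => hf.2 (e a)⟩

lemma mod_two_ne_of_pairwise_ne {a b c d : ℕ} (ha : a ≤ 5) (hb : b ≤ 5) (hc : c ≤ 5) (hd : d ≤ 5)
    (hab : a ≠ b) (hac : a ≠ c) (hbc : b ≠ c) (hda : d ≠ a) (hdb : d ≠ b) (hdc : d ≠ c)
    (hpb : b % 2 = a % 2) (hpc : c % 2 = a % 2) : d % 2 ≠ a % 2 := by
  omega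

end Labeling

namespace Ladder

/-- `(a, b, c, d)` stands for the labels of `x_i, y_i, x_{i+1}, y_{i+1}`. -/
abbrev Window := ℕ × ℕ × ℕ × ℕ

def Window.shift : Window → ℕ → ℕ → Window
  | (_, _, c, d), g, h => (c, d, g, h)

/-- `g, h` are admissible labels of `x_{i+2}, y_{i+2}` after the window `(a, b, c, d)`. -/
def Step : Window → ℕ → ℕ → Prop
  | (a, b, c, d), g, h =>
    TwoApart c g ∧ TwoApart d h ∧ TwoApart g h ∧ g ≠ d ∧ h ≠ c ∧ g ≠ a ∧ h ≠ b

instance : ∀ w g h, Decidable (Step w g h)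
  | (_, _, _, _), _, _ => inferInstanceAs (Decidable (_ ∧ _))

/-- The constraints at the `u`-end, `e` being the label of `u`. -/
def CapStart (e : ℕ) : Window → Prop
  | (a, b, c, d) => TwoApart e a ∧ TwoApart e b ∧ TwoApart a b ∧ TwoApart a c ∧ TwoApart b d ∧
      TwoApart c d ∧ c ≠ b ∧ d ≠ a ∧ c ≠ e ∧ d ≠ e

instance : ∀ e w, Decidable (CapStart e w)
  | _, (_, _, _, _) => inferInstanceAs (Decidable (_ ∧ _))

/-- The constraints at the `v`-end, `e` being the label of `v`. -/
def CapEnd : Window → ℕ → Prop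
  | (a, b, c, d), e => TwoApart c e ∧ TwoApart d e ∧ e ≠ a ∧ e ≠ b

instance : ∀ w e, Decidable (CapEnd w e)
  | (_, _, _, _), _ => inferInstanceAs (Decidable (_ ∧ _))

/-- The windows at `i = 0` below a monochromatic `u`-triangle (computed by exhaustive search). -/
def startWindows : List Window :=
  [(2,4,5,1), (4,2,1,5), (3,5,0,2), (5,3,2,0), (0,4,3,1), (0,4,5,1), (4,0,1,3), (4,0,1,5),
   (1,5,4,0), (1,5,4,2), (5,1,0,4), (5,1,2,4), (0,2,3,5), (2,0,5,3), (1,3,4,0), (3,1,0,4)]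

/-- `phase k` contains every window that can occur at a position `i ≥ 1` with `i % 3 = k`
(the forward closure of `startWindows` under `Step`, computed by exhaustive search). -/
def phase : ℕ → List Window
  | 0 => [(0,3,4,1), (0,3,5,1), (2,5,4,0), (2,5,4,1), (3,0,1,4), (3,0,1,5), (5,2,0,4), (5,2,1,4)]
  | 1 => [(0,4,3,1), (0,4,5,2), (1,4,3,0), (1,4,5,2), (1,5,3,0), (1,5,4,2), (4,0,1,3), (4,0,2,5),
          (4,1,0,3), (4,1,2,5), (5,1,0,3), (5,1,2,4)]
  | _ => [(0,3,2,5), (2,5,0,3), (3,0,5,2), (5,2,3,0)]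

set_option synthInstance.maxSize 100000 in
theorem mem_startWindows : ∀ e < 6, ∀ a < 6, ∀ b < 6, ∀ c < 6, ∀ d < 6,
    e % 2 = a % 2 → a % 2 = b % 2 → CapStart e (a, b, c, d) → (a, b, c, d) ∈ startWindows := by
  decide

theorem shift_mem_phase_one : ∀ w ∈ startWindows, ∀ g < 6, ∀ h < 6,
    Step w g h → w.shift g h ∈ phase 1 := by
  decide

set_option synthInstance.maxSize 100000 in
theorem shift_mem_phase : ∀ k < 3, ∀ w ∈ phase k, ∀ g < 6, ∀ h < 6,
    Step w g h → w.shift g h ∈ phase ((k + 1) % 3) := by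
  decide

theorem not_capEnd : ∀ k < 3, k ≠ 1 → ∀ w ∈ phase k, ∀ e < 6, ¬ CapEnd w e := by
  decide

end Ladder

namespace GLVert

variable {l : ℕ}

def height : GLVert l → ℕ
  | u => 0
  | v => l + 1
  | x i => i + 1
  | y i => i + 1

def flip : GLVert l → GLVert l
  | u => v
  | v => u
  | x i => x i.rev
  | y i => y i.rev

lemma flip_flip (w : GLVert l) : w.flip.flip = w := by
  cases w <;> simp [flip]

lemma flip_x_zero (hl : 0 < l) : (x ⟨0, hl⟩).flip = x ⟨l - 1, by omega⟩ := by
  simp [flip, Fin.ext_iff]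

lemma flip_y_zero (hl : 0 < l) : (y ⟨0, hl⟩).flip = y ⟨l - 1, by omega⟩ := by
  simp [flip, Fin.ext_iff]

end GLVert

namespace GLGraph

variable {l : ℕ}

lemma adj_flip_iff {a b : GLVert l} : (GLGraph l).Adj a.flip b.flip ↔ (GLGraph l).Adj a b := by
  cases a <;> cases b <;> simp [GLGraph, GLRel, GLVert.flip, Fin.ext_iff] <;> omega

def flipIso : GLGraph l ≃g GLGraph l where
  toFun := GLVert.flip
  invFun := GLVert.flip
  left_inv := GLVert.flip_flip
  right_inv := GLVert.flip_flip
  map_rel_iff' := adj_flip_iff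

section Cycles

variable {C : Set (GLVert l)}

lemma eq_of_adj_x_of_height_le {i : Fin l} {w : GLVert l} (h : (GLGraph l).Adj (.x i) w)
    (hw : w.height ≤ i + 1) :
    w = .y i ∨ (w = .u ∧ (i : ℕ) = 0) ∨ ∃ j : Fin l, w = .x j ∧ (j : ℕ) + 1 = i := by
  cases w <;> simp_all [GLGraph, GLRel, GLVert.height] <;> omega

lemma eq_of_adj_y_of_height_le {i : Fin l} {w : GLVert l} (h : (GLGraph l).Adj (.y i) w)
    (hw : w.height ≤ i + 1) :
    w = .x i ∨ (w = .u ∧ (i : ℕ) = 0) ∨ ∃ j : Fin l, w = .y j ∧ (j : ℕ) + 1 = i := by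
  cases w <;> simp_all [GLGraph, GLRel, GLVert.height] <;> omega

lemma eq_of_adj_v (hl : 0 < l) {w : GLVert l} (h : (GLGraph l).Adj .v w) :
    w = .x ⟨l - 1, by omega⟩ ∨ w = .y ⟨l - 1, by omega⟩ := by
  cases w <;> simp_all [GLGraph, GLRel, Fin.ext_iff]

lemma y_mem_and_below_mem_of_top_x (hC : (GLGraph l).TwoNeighborsWithin C) {i : Fin l}
    (hx : .x i ∈ C) (htop : ∀ w ∈ C, w.height ≤ i + 1) :
    .y i ∈ C ∧ ((i : ℕ) = 0 ∧ .u ∈ C ∨ ∃ j : Fin l, (j : ℕ) + 1 = i ∧ .x j ∈ C) := by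
  obtain ⟨s, hs, t, ht, hst, hxs, hxt⟩ := hC _ hx
  rcases eq_of_adj_x_of_height_le hxs (htop s hs) with rfl | ⟨rfl, hi⟩ | ⟨j, rfl, hj⟩ <;>
    rcases eq_of_adj_x_of_height_le hxt (htop t ht) with rfl | ⟨rfl, hi'⟩ | ⟨j', rfl, hj'⟩
  all_goals first
    | exact absurd rfl hst
    | exact ⟨‹_›, by tauto⟩
    | (obtain rfl : j = j' := Fin.ext (by omega); exact absurd rfl hst)
    | (exfalso; omega)

lemma x_mem_and_below_mem_of_top_y (hC : (GLGraph l).TwoNeighborsWithin C) {i : Fin l}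
    (hy : .y i ∈ C) (htop : ∀ w ∈ C, w.height ≤ i + 1) :
    .x i ∈ C ∧ ((i : ℕ) = 0 ∧ .u ∈ C ∨ ∃ j : Fin l, (j : ℕ) + 1 = i ∧ .y j ∈ C) := by
  obtain ⟨s, hs, t, ht, hst, hys, hyt⟩ := hC _ hy
  rcases eq_of_adj_y_of_height_le hys (htop s hs) with rfl | ⟨rfl, hi⟩ | ⟨j, rfl, hj⟩ <;>
    rcases eq_of_adj_y_of_height_le hyt (htop t ht) with rfl | ⟨rfl, hi'⟩ | ⟨j', rfl, hj'⟩
  all_goals first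
    | exact absurd rfl hst
    | exact ⟨‹_›, by tauto⟩
    | (obtain rfl : j = j' := Fin.ext (by omega); exact absurd rfl hst)
    | (exfalso; omega)

lemma square_or_uTriangle_of_top_rung (hl : 0 < l) (hC : (GLGraph l).TwoNeighborsWithin C)
    {i : Fin l} (hx : .x i ∈ C) (hy : .y i ∈ C) (htop : ∀ w ∈ C, w.height ≤ i + 1) :
    (∃ i j : Fin l, (i : ℕ) + 1 = j ∧ .x i ∈ C ∧ .y i ∈ C ∧ .x j ∈ C ∧ .y j ∈ C) ∨
    (.u ∈ C ∧ .x ⟨0, hl⟩ ∈ C ∧ .y ⟨0, hl⟩ ∈ C) := by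
  rcases (y_mem_and_below_mem_of_top_x hC hx htop).2 with ⟨hi, hu⟩ | ⟨j, hj, hxj⟩
  · obtain rfl : i = ⟨0, hl⟩ := Fin.ext hi
    exact Or.inr ⟨hu, hx, hy⟩
  · rcases (x_mem_and_below_mem_of_top_y hC hy htop).2 with ⟨hi, -⟩ | ⟨j', hj', hyj⟩
    · omega
    · obtain rfl : j = j' := Fin.ext (by omega)
      exact Or.inl ⟨j, i, hj, hxj, hyj, hx, hy⟩

lemma exists_square_or_endTriangle (hl : 0 < l) (hfin : C.Finite) (hne : C.Nonempty)
    (hC : (GLGraph l).TwoNeighborsWithin C) :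
    (∃ i j : Fin l, (i : ℕ) + 1 = j ∧ .x i ∈ C ∧ .y i ∈ C ∧ .x j ∈ C ∧ .y j ∈ C) ∨
    (.u ∈ C ∧ .x ⟨0, hl⟩ ∈ C ∧ .y ⟨0, hl⟩ ∈ C) ∨
    (.v ∈ C ∧ .x ⟨l - 1, by omega⟩ ∈ C ∧ .y ⟨l - 1, by omega⟩ ∈ C) := by
  obtain ⟨z, hz, htop⟩ := Set.exists_max_image C GLVert.height hfin hne
  cases z with
  | u =>
    obtain ⟨s, hs, -, -, -, hus, -⟩ := hC _ hz
    have := htop s hs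
    cases s <;> simp_all [GLGraph, GLRel, GLVert.height]
  | v =>
    obtain ⟨s, hs, t, ht, hst, hvs, hvt⟩ := hC _ hz
    rcases eq_of_adj_v hl hvs with rfl | rfl <;> rcases eq_of_adj_v hl hvt with rfl | rfl
    all_goals first
      | exact absurd rfl hst
      | exact Or.inr (Or.inr ⟨hz, hs, ht⟩)
      | exact Or.inr (Or.inr ⟨hz, ht, hs⟩)
  | x i =>
    exact (square_or_uTriangle_of_top_rung hl hC hz
      (y_mem_and_below_mem_of_top_x hC hz htop).1 htop).imp_right Or.inl
  | y i =>
    exact (square_or_uTriangle_of_top_rung hl hC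
      (x_mem_and_below_mem_of_top_y hC hz htop).1 hz htop).imp_right Or.inl

end Cycles

section Labels

variable {f : GLVert l → ℕ}

def labelX (f : GLVert l → ℕ) (i : ℕ) : ℕ := if h : i < l then f (.x ⟨i, h⟩) else 0

def labelY (f : GLVert l → ℕ) (i : ℕ) : ℕ := if h : i < l then f (.y ⟨i, h⟩) else 0

def window (f : GLVert l → ℕ) (i : ℕ) : Ladder.Window :=
  (labelX f i, labelY f i, labelX f (i + 1), labelY f (i + 1))

lemma labelX_of_lt {i : ℕ} (h : i < l) : labelX f i = f (.x ⟨i, h⟩) := dif_pos h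

lemma labelY_of_lt {i : ℕ} (h : i < l) : labelY f i = f (.y ⟨i, h⟩) := dif_pos h

lemma labelX_lt_six (hf : IsKL21Labeling (GLGraph l) 5 f) (i : ℕ) : labelX f i < 6 := by
  unfold labelX
  split_ifs
  · exact Nat.lt_succ_of_le (hf.2 _)
  · omega

lemma labelY_lt_six (hf : IsKL21Labeling (GLGraph l) 5 f) (i : ℕ) : labelY f i < 6 := by
  unfold labelY
  split_ifs
  · exact Nat.lt_succ_of_le (hf.2 _)
  · omega

lemma step_window (hf : IsL21Labeling (GLGraph l) f) {i : ℕ} (hi : i + 2 < l) :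
    Ladder.Step (window f i) (labelX f (i + 2)) (labelY f (i + 2)) := by
  simp only [window, Ladder.Step, labelX_of_lt hi, labelY_of_lt hi,
    labelX_of_lt (show i + 1 < l by omega), labelY_of_lt (show i + 1 < l by omega),
    labelX_of_lt (show i < l by omega), labelY_of_lt (show i < l by omega)]
  refine ⟨hf.twoApart_of_adj ?_, hf.twoApart_of_adj ?_, hf.twoApart_of_adj ?_,
    hf.ne_of_adj_of_adj (c := .x ⟨i + 1, by omega⟩) ?_ ?_ ?_ ?_,
    hf.ne_of_adj_of_adj (c := .y ⟨i + 1, by omega⟩) ?_ ?_ ?_ ?_,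
    hf.ne_of_adj_of_adj (c := .x ⟨i + 1, by omega⟩) ?_ ?_ ?_ ?_,
    hf.ne_of_adj_of_adj (c := .y ⟨i + 1, by omega⟩) ?_ ?_ ?_ ?_⟩
  all_goals simp [GLGraph, GLRel] <;> omega

lemma capStart_window (hf : IsL21Labeling (GLGraph l) f) (hl : 2 ≤ l) :
    Ladder.CapStart (f .u) (window f 0) := by
  simp only [window, Ladder.CapStart, labelX_of_lt (show 0 < l by omega),
    labelY_of_lt (show 0 < l by omega), labelX_of_lt (show 0 + 1 < l by omega),
    labelY_of_lt (show 0 + 1 < l by omega)]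
  refine ⟨hf.twoApart_of_adj ?_, hf.twoApart_of_adj ?_, hf.twoApart_of_adj ?_,
    hf.twoApart_of_adj ?_, hf.twoApart_of_adj ?_, hf.twoApart_of_adj ?_,
    hf.ne_of_adj_of_adj (c := .x ⟨0, by omega⟩) ?_ ?_ ?_ ?_,
    hf.ne_of_adj_of_adj (c := .y ⟨0, by omega⟩) ?_ ?_ ?_ ?_,
    hf.ne_of_adj_of_adj (c := .x ⟨0, by omega⟩) ?_ ?_ ?_ ?_,
    hf.ne_of_adj_of_adj (c := .y ⟨0, by omega⟩) ?_ ?_ ?_ ?_⟩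
  all_goals simp [GLGraph, GLRel]

lemma capEnd_window (hf : IsL21Labeling (GLGraph l) f) (hl : 2 ≤ l) :
    Ladder.CapEnd (window f (l - 2)) (f .v) := by
  simp only [window, Ladder.CapEnd, labelX_of_lt (show l - 2 < l by omega),
    labelY_of_lt (show l - 2 < l by omega), labelX_of_lt (show l - 2 + 1 < l by omega),
    labelY_of_lt (show l - 2 + 1 < l by omega)]
  refine ⟨hf.twoApart_of_adj ?_, hf.twoApart_of_adj ?_,
    hf.ne_of_adj_of_adj (c := .x ⟨l - 1, by omega⟩) ?_ ?_ ?_ ?_,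
    hf.ne_of_adj_of_adj (c := .y ⟨l - 1, by omega⟩) ?_ ?_ ?_ ?_⟩
  all_goals simp [GLGraph, GLRel] <;> omega

lemma window_mem_phase (hf : IsKL21Labeling (GLGraph l) 5 f)
    (hstart : window f 0 ∈ Ladder.startWindows) {i : ℕ} (hi : 1 ≤ i) (hil : i + 1 < l) :
    window f i ∈ Ladder.phase (i % 3) := by
  induction i, hi using Nat.le_induction with
  | base =>
    exact Ladder.shift_mem_phase_one _ hstart _ (labelX_lt_six hf 2) _ (labelY_lt_six hf 2)
      (step_window hf.1 hil)
  | succ i hi ih =>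
    have := Ladder.shift_mem_phase _ (Nat.mod_lt _ (by norm_num)) _ (ih (by omega)) _
      (labelX_lt_six hf (i + 2)) _ (labelY_lt_six hf (i + 2)) (step_window hf.1 hil)
    rwa [show (i % 3 + 1) % 3 = (i + 1) % 3 by omega] at this

theorem three_dvd_of_uTriangle (hf : IsKL21Labeling (GLGraph l) 5 f) (hl : 3 ≤ l)
    (hx : f (.x ⟨0, by omega⟩) % 2 = f .u % 2) (hy : f (.y ⟨0, by omega⟩) % 2 = f .u % 2) :
    3 ∣ l := by
  have hstart : window f 0 ∈ Ladder.startWindows :=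
    Ladder.mem_startWindows _ (Nat.lt_succ_of_le (hf.2 _)) _ (labelX_lt_six hf 0)
      _ (labelY_lt_six hf 0) _ (labelX_lt_six hf 1) _ (labelY_lt_six hf 1)
      (by rw [labelX_of_lt (by omega), hx])
      (by rw [labelX_of_lt (by omega), labelY_of_lt (by omega), hx, hy])
      (capStart_window hf.1 (by omega))
  have hlast := window_mem_phase hf hstart (i := l - 2) (by omega) (by omega)
  by_contra hdvd
  exact Ladder.not_capEnd _ (Nat.mod_lt _ (by norm_num)) (by omega) _ hlast _
    (Nat.lt_succ_of_le (hf.2 _)) (capEnd_window hf.1 (by omega))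

theorem three_dvd_of_vTriangle (hf : IsKL21Labeling (GLGraph l) 5 f) (hl : 3 ≤ l)
    (hx : f (.x ⟨l - 1, by omega⟩) % 2 = f .v % 2)
    (hy : f (.y ⟨l - 1, by omega⟩) % 2 = f .v % 2) : 3 ∣ l :=
  three_dvd_of_uTriangle (hf.comp_iso flipIso) hl
    ((congrArg (f · % 2) (GLVert.flip_x_zero _)).trans hx)
    ((congrArg (f · % 2) (GLVert.flip_y_zero _)).trans hy)

lemma not_monochromatic_square (hf : IsKL21Labeling (GLGraph l) 5 f) {i j : Fin l}
    (hij : (i : ℕ) + 1 = j) (hyi : f (.y i) % 2 = f (.x i) % 2)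
    (hxj : f (.x j) % 2 = f (.x i) % 2) : f (.y j) % 2 ≠ f (.x i) % 2 := by
  refine mod_two_ne_of_pairwise_ne (hf.2 _) (hf.2 _) (hf.2 _) (hf.2 _)
    (hf.1.twoApart_of_adj ?_).ne (hf.1.twoApart_of_adj ?_).ne
    (hf.1.ne_of_adj_of_adj (c := .x i) ?_ ?_ ?_ ?_) (hf.1.ne_of_adj_of_adj (c := .x j) ?_ ?_ ?_ ?_)
    (hf.1.twoApart_of_adj ?_).ne (hf.1.twoApart_of_adj ?_).ne hyi hxj
  all_goals simp [GLGraph, GLRel, Fin.ext_iff] <;> omega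

lemma uTriangle_closed (hf : IsKL21Labeling (GLGraph l) 5 f) (hl : 2 ≤ l) {p : ℕ}
    (hu : f .u % 2 = p) (hx : f (.x ⟨0, by omega⟩) % 2 = p) (hy : f (.y ⟨0, by omega⟩) % 2 = p) :
    ∀ a ∈ ({.u, .x ⟨0, by omega⟩, .y ⟨0, by omega⟩} : Set (GLVert l)), ∀ b ∈ {w | f w % 2 = p},
      (GLGraph l).Adj a b → b ∈ ({.u, .x ⟨0, by omega⟩, .y ⟨0, by omega⟩} : Set (GLVert l)) := by
  have hstart := capStart_window hf.1 hl
  simp only [window, Ladder.CapStart, labelX_of_lt (show 0 < l by omega),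
    labelY_of_lt (show 0 < l by omega), labelX_of_lt (show 0 + 1 < l by omega),
    labelY_of_lt (show 0 + 1 < l by omega)] at hstart
  obtain ⟨hux, huy, hxy, hxx, hyy, -, hxy', hyx', hxu, hyu⟩ := hstart
  -- the three labels of the triangle make up the whole parity class `p` within `{0, …, 5}`
  have hclass (w : GLVert l) (h1 : f w ≠ f .u) (h2 : f w ≠ f (.x ⟨0, by omega⟩))
      (h3 : f w ≠ f (.y ⟨0, by omega⟩)) : f w % 2 ≠ p := by
    rw [← hu]
    exact mod_two_ne_of_pairwise_ne (hf.2 _) (hf.2 _) (hf.2 _) (hf.2 _) hux.ne huy.ne hxy.ne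
      h1 h2 h3 (hx.trans hu.symm) (hy.trans hu.symm)
  have hx1 (j : Fin l) (hj : (j : ℕ) = 1) : f (.x j) % 2 ≠ p := by
    rw [show j = ⟨0 + 1, by omega⟩ from Fin.ext hj]
    exact hclass _ hxu hxx.ne.symm hxy'
  have hy1 (j : Fin l) (hj : (j : ℕ) = 1) : f (.y j) % 2 ≠ p := by
    rw [show j = ⟨0 + 1, by omega⟩ from Fin.ext hj]
    exact hclass _ hyu hyx' hyy.ne.symm
  rintro a ha b hb hab
  simp only [Set.mem_insert_iff, Set.mem_singleton_iff, Set.mem_ofPred_eq] at ha hb ⊢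
  rcases ha with rfl | rfl | rfl <;> cases b <;> simp_all [GLGraph, GLRel, Fin.ext_iff] <;> omega

lemma vTriangle_closed (hf : IsKL21Labeling (GLGraph l) 5 f) (hl : 2 ≤ l) {p : ℕ}
    (hv : f .v % 2 = p) (hx : f (.x ⟨l - 1, by omega⟩) % 2 = p)
    (hy : f (.y ⟨l - 1, by omega⟩) % 2 = p) :
    ∀ a ∈ ({.v, .x ⟨l - 1, by omega⟩, .y ⟨l - 1, by omega⟩} : Set (GLVert l)),
      ∀ b ∈ {w | f w % 2 = p}, (GLGraph l).Adj a b →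
        b ∈ ({.v, .x ⟨l - 1, by omega⟩, .y ⟨l - 1, by omega⟩} : Set (GLVert l)) := by
  have hflip (w : GLVert l) : w.flip ∈ ({.u, .x ⟨0, by omega⟩, .y ⟨0, by omega⟩} : Set _) ↔
      w ∈ ({.v, .x ⟨l - 1, by omega⟩, .y ⟨l - 1, by omega⟩} : Set (GLVert l)) := by
    cases w <;> simp [GLVert.flip, Fin.ext_iff] <;> omega
  intro a ha b hb hab
  rw [← hflip] at ha ⊢
  refine uTriangle_closed (hf.comp_iso flipIso) hl hv ?_ ?_ _ ha _ ?_ (adj_flip_iff.mpr hab)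
  · exact (congrArg (f · % 2) (GLVert.flip_x_zero _)).trans hx
  · exact (congrArg (f · % 2) (GLVert.flip_y_zero _)).trans hy
  · exact (congrArg (f · % 2) b.flip_flip).trans hb

lemma H1Set_eq (hf : ∀ w, f w ≤ 5) : H1Set l f = {w | f w % 2 = 0} := by
  ext w
  have := hf w
  simp only [H1Set, Set.mem_ofPred_eq]
  omega

lemma H2Set_eq (hf : ∀ w, f w ≤ 5) : H2Set l f = {w | f w % 2 = 1} := by
  ext w
  have := hf w
  simp only [H2Set, Set.mem_ofPred_eq]
  omega

theorem three_dvd_and_isTriangleSet_of_hasCycleIn (hf : IsKL21Labeling (GLGraph l) 5 f)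
    (hl : 3 ≤ l) {p : ℕ} {T : Set (GLVert l)} (hT : IsCompOf (GLGraph l) {w | f w % 2 = p} T)
    (hcyc : HasCycleIn (GLGraph l) T) : 3 ∣ l ∧ IsTriangleSet (GLGraph l) T := by
  obtain ⟨r, c, hc, hcT⟩ := hcyc
  have hp (w : GLVert l) (hw : w ∈ c.support) : f w % 2 = p := hT.subset (hcT w hw)
  rcases exists_square_or_endTriangle (by omega) c.support.finite_toSet ⟨r, c.start_mem_support⟩
    hc.twoNeighborsWithin_support with ⟨i, j, hij, hxi, hyi, hxj, hyj⟩ | ⟨hu, hx, hy⟩ | ⟨hv, hx, hy⟩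
  · exact (not_monochromatic_square hf hij ((hp _ hyi).trans (hp _ hxi).symm)
      ((hp _ hxj).trans (hp _ hxi).symm) ((hp _ hyj).trans (hp _ hxi).symm)).elim
  · refine ⟨three_dvd_of_uTriangle hf hl ((hp _ hx).trans (hp _ hu).symm)
      ((hp _ hy).trans (hp _ hu).symm), .u, .x ⟨0, by omega⟩, .y ⟨0, by omega⟩, by simp, by simp,
      by simp, ?_, by simp [GLGraph, GLRel], by simp [GLGraph, GLRel], by simp [GLGraph, GLRel]⟩
    exact hT.eq_of_adj_closed (by rintro w (rfl | rfl | rfl) <;> exact hcT _ ‹_›)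
      (Set.insert_nonempty _ _) (uTriangle_closed hf (by omega) (hp _ hu) (hp _ hx) (hp _ hy))
  · refine ⟨three_dvd_of_vTriangle hf hl ((hp _ hx).trans (hp _ hv).symm)
      ((hp _ hy).trans (hp _ hv).symm), .v, .x ⟨l - 1, by omega⟩, .y ⟨l - 1, by omega⟩, by simp,
      by simp, by simp, ?_, by simp [GLGraph, GLRel], by simp [GLGraph, GLRel],
      by simp [GLGraph, GLRel]⟩
    exact hT.eq_of_adj_closed (by rintro w (rfl | rfl | rfl) <;> exact hcT _ ‹_›)
      (Set.insert_nonempty _ _) (vTriangle_closed hf (by omega) (hp _ hv) (hp _ hx) (hp _ hy))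

end Labels

end GLGraph

theorem stmt5 (l : ℕ) (hl : 3 ≤ l) (f : GLVert l → ℕ)
    (hf : IsKL21Labeling (GLGraph l) 5 f)
    (T : Set (GLVert l))
    (hT : IsCompOf (GLGraph l) (H1Set l f) T ∨ IsCompOf (GLGraph l) (H2Set l f) T) :
    (¬ 3 ∣ l → ¬ HasCycleIn (GLGraph l) T) ∧
    (3 ∣ l → IsTriangleSet (GLGraph l) T ∨ ¬ HasCycleIn (GLGraph l) T) := by
  obtain ⟨p, hTp⟩ : ∃ p, IsCompOf (GLGraph l) {w | f w % 2 = p} T := by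
    rcases hT with hT | hT
    · exact ⟨0, GLGraph.H1Set_eq hf.2 ▸ hT⟩
    · exact ⟨1, GLGraph.H2Set_eq hf.2 ▸ hT⟩
  have key := GLGraph.three_dvd_and_isTriangleSet_of_hasCycleIn hf hl hTp
  refine ⟨fun h3 hcyc => h3 (key hcyc).1, fun _ => ?_⟩
  by_cases hcyc : HasCycleIn (GLGraph l) T
  · exact Or.inl (key hcyc).2
  · exact Or.inr hcyc
end

section
/- Let l ≥ 3, let f be a 5-L(2,1)-labeling of G(l), and let H be a path component of H_1 or of H_2. Then there is no index i with 1 ≤ i ≤ l−2 such that all four vertices x_i, x_{i+1}, y_{i+1}, y_{i+2} belong to V(H), and likewise no index i such that all four vertices y_i, y_{i+1}, x_{i+1}, x_{i+2} belong to V(H). -/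
/-- The (induced) subgraph of `G` with vertex set `T` is a path: there is an ordering
of `T` in which exactly the consecutive vertices are adjacent. -/
def IsPathSet {V : Type*} (G : SimpleGraph V) (T : Set V) : Prop :=
  ∃ (n : ℕ) (p : Fin (n + 1) → V), Function.Injective p ∧ T = Set.range p ∧
    ∀ i j : Fin (n + 1), G.Adj (p i) (p j) ↔ ((i : ℕ) + 1 = (j : ℕ) ∨ (j : ℕ) + 1 = (i : ℕ))

/-- `w` is an end vertex of the path with vertex set `T`. -/
def IsPathEnd {V : Type*} (G : SimpleGraph V) (T : Set V) (w : V) : Prop :=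
  ∃ (n : ℕ) (p : Fin (n + 1) → V), Function.Injective p ∧ T = Set.range p ∧
    (∀ i j : Fin (n + 1), G.Adj (p i) (p j) ↔ ((i : ℕ) + 1 = (j : ℕ) ∨ (j : ℕ) + 1 = (i : ℕ))) ∧
    (w = p 0 ∨ w = p (Fin.last n))

section Aux

variable {l : ℕ}

lemma natAbs_two_le {a b : ℕ} (h : 2 ≤ ((a : ℤ) - b).natAbs) :
    a + 2 ≤ b ∨ b + 2 ≤ a := by omega

lemma adj_xx {i j : Fin l} (h : (i : ℕ) + 1 = j) :
    (GLGraph l).Adj (.x i) (.x j) := by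
  rw [GLGraph, SimpleGraph.fromRel_adj]
  exact ⟨fun he => by injection he with h'; subst h'; omega, Or.inl h⟩

lemma adj_yy {i j : Fin l} (h : (i : ℕ) + 1 = j) :
    (GLGraph l).Adj (.y i) (.y j) := by
  rw [GLGraph, SimpleGraph.fromRel_adj]
  exact ⟨fun he => by injection he with h'; subst h'; omega, Or.inl h⟩

lemma adj_xy (i : Fin l) : (GLGraph l).Adj (.x i) (.y i) := by
  rw [GLGraph, SimpleGraph.fromRel_adj]
  exact ⟨fun he => by injection he, Or.inl rfl⟩

lemma not_adj_xy {i j : Fin l} (h : (i : ℕ) + 1 = j) :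
    ¬ (GLGraph l).Adj (.x i) (.y j) := by
  rw [GLGraph, SimpleGraph.fromRel_adj]
  rintro ⟨-, h1 | h2⟩
  · have := congrArg Fin.val h1; omega
  · exact h2

lemma not_adj_yx {i j : Fin l} (h : (i : ℕ) + 1 = j) :
    ¬ (GLGraph l).Adj (.y i) (.x j) := by
  rw [GLGraph, SimpleGraph.fromRel_adj]
  rintro ⟨-, h1 | h2⟩
  · exact h1
  · have := congrArg Fin.val h2; omega

lemma dist_xy {i j : Fin l} (h : (i : ℕ) + 1 = j) :
    (GLGraph l).dist (.x i) (.y j) = 2 := by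
  have hle : (GLGraph l).dist (.x i) (.y j) ≤ 2 := by
    simpa using SimpleGraph.dist_le
      (SimpleGraph.Walk.cons (adj_xx h) (SimpleGraph.Walk.cons (adj_xy j) SimpleGraph.Walk.nil))
  have hr : (GLGraph l).Reachable (.x i) (.y j) :=
    ⟨SimpleGraph.Walk.cons (adj_xx h) (SimpleGraph.Walk.cons (adj_xy j) SimpleGraph.Walk.nil)⟩
  have h0 : (GLGraph l).dist (.x i) (.y j) ≠ 0 := by
    intro he
    have := (SimpleGraph.Reachable.dist_eq_zero_iff hr).mp he
    injection this
  have h1 : (GLGraph l).dist (.x i) (.y j) ≠ 1 := fun he =>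
    not_adj_xy h (SimpleGraph.dist_eq_one_iff_adj.mp he)
  omega

lemma dist_yx {i j : Fin l} (h : (i : ℕ) + 1 = j) :
    (GLGraph l).dist (.y i) (.x j) = 2 := by
  have hle : (GLGraph l).dist (.y i) (.x j) ≤ 2 := by
    simpa using SimpleGraph.dist_le
      (SimpleGraph.Walk.cons (adj_yy h) (SimpleGraph.Walk.cons (adj_xy j).symm SimpleGraph.Walk.nil))
  have hr : (GLGraph l).Reachable (.y i) (.x j) :=
    ⟨SimpleGraph.Walk.cons (adj_yy h) (SimpleGraph.Walk.cons (adj_xy j).symm SimpleGraph.Walk.nil)⟩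
  have h0 : (GLGraph l).dist (.y i) (.x j) ≠ 0 := by
    intro he
    have := (SimpleGraph.Reachable.dist_eq_zero_iff hr).mp he
    injection this
  have h1 : (GLGraph l).dist (.y i) (.x j) ≠ 1 := fun he =>
    not_adj_yx h (SimpleGraph.dist_eq_one_iff_adj.mp he)
  omega

lemma path_no_c4 {V : Type*} {G : SimpleGraph V} {T : Set V} (h : IsPathSet G T)
    {w1 w2 w3 w4 : V} (h1 : w1 ∈ T) (h2 : w2 ∈ T) (h3 : w3 ∈ T) (h4 : w4 ∈ T)
    (a12 : G.Adj w1 w2) (a23 : G.Adj w2 w3) (a34 : G.Adj w3 w4) (a41 : G.Adj w4 w1)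
    (h13 : w1 ≠ w3) (h24 : w2 ≠ w4) : False := by
  obtain ⟨n, p, hp, hrange, hadj⟩ := h
  rw [hrange] at h1 h2 h3 h4
  obtain ⟨i1, rfl⟩ := h1
  obtain ⟨i2, rfl⟩ := h2
  obtain ⟨i3, rfl⟩ := h3
  obtain ⟨i4, rfl⟩ := h4
  have r12 := (hadj i1 i2).mp a12
  have r23 := (hadj i2 i3).mp a23
  have r34 := (hadj i3 i4).mp a34
  have r41 := (hadj i4 i1).mp a41
  have v13 : (i1 : ℕ) ≠ i3 := fun hv => h13 (congrArg p (Fin.ext hv))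
  have v24 : (i2 : ℕ) ≠ i4 := fun hv => h24 (congrArg p (Fin.ext hv))
  omega

lemma comp_sub {V : Type*} {G : SimpleGraph V} {S T : Set V}
    (h : IsCompOf G S T) : T ⊆ S := by
  obtain ⟨c, rfl⟩ := h
  rintro w ⟨⟨w, hw⟩, -, rfl⟩
  exact hw

lemma comp_closed {V : Type*} {G : SimpleGraph V} {S T : Set V} (h : IsCompOf G S T)
    {w t : V} (hw : w ∈ S) (ht : t ∈ T) (hadj : G.Adj w t) : w ∈ T := by
  obtain ⟨c, rfl⟩ := h
  obtain ⟨⟨t, htS⟩, htc, rfl⟩ := ht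
  refine ⟨⟨w, hw⟩, ?_, rfl⟩
  have hi : (G.induce S).Adj ⟨w, hw⟩ ⟨t, htS⟩ := by
    simp only [SimpleGraph.comap_adj, Function.Embedding.coe_subtype]
    exact hadj
  simp only [Set.mem_setOf_eq] at htc ⊢
  exact (SimpleGraph.ConnectedComponent.connectedComponentMk_eq_of_adj hi).trans htc

set_option maxHeartbeats 800000 in
lemma core_x {l : ℕ} (f : GLVert l → ℕ) (hf : IsKL21Labeling (GLGraph l) 5 f)
    {S T : Set (GLVert l)} {c0 : ℕ} (hc : c0 ≤ 1)
    (hS : ∀ w, w ∈ S ↔ (f w = c0 ∨ f w = c0 + 2 ∨ f w = c0 + 4))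
    (hT : IsCompOf (GLGraph l) S T) (hpath : IsPathSet (GLGraph l) T)
    {i j m : Fin l} (hij : (i : ℕ) + 1 = j) (hjm : (j : ℕ) + 1 = m)
    (hxi : GLVert.x i ∈ T) (hxj : GLVert.x j ∈ T)
    (hyj : GLVert.y j ∈ T) (hym : GLVert.y m ∈ T) : False := by
  have hsub := comp_sub hT
  have pa := (hS _).mp (hsub hxi)
  have pb := (hS _).mp (hsub hxj)
  have pc := (hS _).mp (hsub hyj)
  have pd := (hS _).mp (hsub hym)
  have pe : ¬ (f (.y i) = c0 ∨ f (.y i) = c0 + 2 ∨ f (.y i) = c0 + 4) := by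
    intro hp
    have hmem : GLVert.y i ∈ T :=
      comp_closed hT ((hS _).mpr hp) hxi (adj_xy i).symm
    exact path_no_c4 hpath hmem hxi hxj hyj
      (adj_xy i).symm (adj_xx hij) (adj_xy j) (adj_yy hij).symm
      (fun he => by injection he) (fun he => by injection he)
  have pg : ¬ (f (.x m) = c0 ∨ f (.x m) = c0 + 2 ∨ f (.x m) = c0 + 4) := by
    intro hp
    have hmem : GLVert.x m ∈ T :=
      comp_closed hT ((hS _).mpr hp) hxj (adj_xx hjm).symm
    exact path_no_c4 hpath hmem hym hyj hxj
      (adj_xy m) (adj_yy hjm).symm (adj_xy j).symm (adj_xx hjm)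
      (fun he => by injection he) (fun he => by injection he)
  have h1 := natAbs_two_le (hf.1.1 _ _ (adj_xx hij))
  have h2 := natAbs_two_le (hf.1.1 _ _ (adj_xy j))
  have h3 := natAbs_two_le (hf.1.1 _ _ (adj_yy hjm))
  have h4 : f (.x i) ≠ f (.y j) := hf.1.2 _ _ (dist_xy hij)
  have h5 : f (.x j) ≠ f (.y m) := hf.1.2 _ _ (dist_xy hjm)
  have h6 := natAbs_two_le (hf.1.1 _ _ (adj_xy i))
  have h7 := natAbs_two_le (hf.1.1 _ _ (adj_yy hij))
  have h8 := natAbs_two_le (hf.1.1 _ _ (adj_xx hjm))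
  have h9 := natAbs_two_le (hf.1.1 _ _ (adj_xy m))
  have b1 := hf.2 (GLVert.x i)
  have b2 := hf.2 (GLVert.x j)
  have b3 := hf.2 (GLVert.y j)
  have b4 := hf.2 (GLVert.y m)
  have b5 := hf.2 (GLVert.y i)
  have b6 := hf.2 (GLVert.x m)
  omega

set_option maxHeartbeats 800000 in
lemma core_y {l : ℕ} (f : GLVert l → ℕ) (hf : IsKL21Labeling (GLGraph l) 5 f)
    {S T : Set (GLVert l)} {c0 : ℕ} (hc : c0 ≤ 1)
    (hS : ∀ w, w ∈ S ↔ (f w = c0 ∨ f w = c0 + 2 ∨ f w = c0 + 4))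
    (hT : IsCompOf (GLGraph l) S T) (hpath : IsPathSet (GLGraph l) T)
    {i j m : Fin l} (hij : (i : ℕ) + 1 = j) (hjm : (j : ℕ) + 1 = m)
    (hyi : GLVert.y i ∈ T) (hyj : GLVert.y j ∈ T)
    (hxj : GLVert.x j ∈ T) (hxm : GLVert.x m ∈ T) : False := by
  have hsub := comp_sub hT
  have pa := (hS _).mp (hsub hyi)
  have pb := (hS _).mp (hsub hyj)
  have pc := (hS _).mp (hsub hxj)
  have pd := (hS _).mp (hsub hxm)
  have pe : ¬ (f (.x i) = c0 ∨ f (.x i) = c0 + 2 ∨ f (.x i) = c0 + 4) := by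
    intro hp
    have hmem : GLVert.x i ∈ T :=
      comp_closed hT ((hS _).mpr hp) hyi (adj_xy i)
    exact path_no_c4 hpath hmem hyi hyj hxj
      (adj_xy i) (adj_yy hij) (adj_xy j).symm (adj_xx hij).symm
      (fun he => by injection he) (fun he => by injection he)
  have pg : ¬ (f (.y m) = c0 ∨ f (.y m) = c0 + 2 ∨ f (.y m) = c0 + 4) := by
    intro hp
    have hmem : GLVert.y m ∈ T :=
      comp_closed hT ((hS _).mpr hp) hyj (adj_yy hjm).symm
    exact path_no_c4 hpath hmem hxm hxj hyj
      (adj_xy m).symm (adj_xx hjm).symm (adj_xy j) (adj_yy hjm)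
      (fun he => by injection he) (fun he => by injection he)
  have h1 := natAbs_two_le (hf.1.1 _ _ (adj_yy hij))
  have h2 := natAbs_two_le (hf.1.1 _ _ (adj_xy j))
  have h3 := natAbs_two_le (hf.1.1 _ _ (adj_xx hjm))
  have h4 : f (.y i) ≠ f (.x j) := hf.1.2 _ _ (dist_yx hij)
  have h5 : f (.y j) ≠ f (.x m) := hf.1.2 _ _ (dist_yx hjm)
  have h6 := natAbs_two_le (hf.1.1 _ _ (adj_xy i))
  have h7 := natAbs_two_le (hf.1.1 _ _ (adj_xx hij))
  have h8 := natAbs_two_le (hf.1.1 _ _ (adj_yy hjm))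
  have h9 := natAbs_two_le (hf.1.1 _ _ (adj_xy m))
  have b1 := hf.2 (GLVert.y i)
  have b2 := hf.2 (GLVert.y j)
  have b3 := hf.2 (GLVert.x j)
  have b4 := hf.2 (GLVert.x m)
  have b5 := hf.2 (GLVert.x i)
  have b6 := hf.2 (GLVert.y m)
  omega

end Aux

theorem stmt7 (l : ℕ) (hl : 3 ≤ l) (f : GLVert l → ℕ)
    (hf : IsKL21Labeling (GLGraph l) 5 f)
    (T : Set (GLVert l))
    (hT : IsCompOf (GLGraph l) (H1Set l f) T ∨ IsCompOf (GLGraph l) (H2Set l f) T)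
    (hpath : IsPathSet (GLGraph l) T) :
    (¬ ∃ i j m : Fin l, (i : ℕ) + 1 = (j : ℕ) ∧ (j : ℕ) + 1 = (m : ℕ) ∧
        GLVert.x i ∈ T ∧ GLVert.x j ∈ T ∧ GLVert.y j ∈ T ∧ GLVert.y m ∈ T) ∧
    (¬ ∃ i j m : Fin l, (i : ℕ) + 1 = (j : ℕ) ∧ (j : ℕ) + 1 = (m : ℕ) ∧
        GLVert.y i ∈ T ∧ GLVert.y j ∈ T ∧ GLVert.x j ∈ T ∧ GLVert.x m ∈ T) := by
  have hS1 : ∀ w, w ∈ H1Set l f ↔ (f w = 0 ∨ f w = 0 + 2 ∨ f w = 0 + 4) := fun w => by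
    simp [H1Set]
  have hS2 : ∀ w, w ∈ H2Set l f ↔ (f w = 1 ∨ f w = 1 + 2 ∨ f w = 1 + 4) := fun w => by
    simp [H2Set]
  constructor
  · rintro ⟨i, j, m, hij, hjm, h1, h2, h3, h4⟩
    rcases hT with hT | hT
    · exact core_x f hf (by norm_num) hS1 hT hpath hij hjm h1 h2 h3 h4
    · exact core_x f hf (by norm_num) hS2 hT hpath hij hjm h1 h2 h3 h4
  · rintro ⟨i, j, m, hij, hjm, h1, h2, h3, h4⟩
    rcases hT with hT | hT
    · exact core_y f hf (by norm_num) hS1 hT hpath hij hjm h1 h2 h3 h4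
    · exact core_y f hf (by norm_num) hS2 hT hpath hij hjm h1 h2 h3 h4
end
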